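/- Let H be a real Hilbert space, let p_1,…,p_N ≥ 0 with ∑_{i=1}^N p_i = 1, let F_i : H → ℝ be convex and differentiable for each i, let F = ∑_{i=1}^N p_i F_i, and let μ > 0, w̃ ∈ H, and B ≥ 1 satisfy ∑_{i=1}^N p_i‖∇F_i(w̃)‖² ≤ B²‖∇F(w̃)‖². For each i let w_i⁺ be a global minimizer of w ↦ F_i(w) + (μ/2)‖w − w̃‖², and let w̃⁺ = ∑_{i=1}^N p_i w_i⁺ + n for some noise vector n ∈ H. Then ‖w̃⁺ − w̃‖ ≤ (B/μ)‖∇F(w̃)‖ + ‖n‖. -/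

import Mathlib

/-!
For a single client, the first-order optimality condition of the proximal problem reads
`∇F_i(w_i⁺) = μ (w̃ - w_i⁺)`; pairing it with the monotonicity of the gradient of the convex
`F_i` gives `μ ‖w_i⁺ - w̃‖² ≤ -⟪∇F_i(w̃), w_i⁺ - w̃⟫`, hence `‖w_i⁺ - w̃‖ ≤ ‖∇F_i(w̃)‖ / μ`.
Averaging with the weights `p_i`, Jensen's inequality `(∑ p_i a_i)² ≤ ∑ p_i a_i²` and the
dissimilarity bound give `∑ p_i ‖∇F_i(w̃)‖ ≤ B ‖∇F(w̃)‖`; the noise enters through the triangle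
inequality.
-/

open Finset
open scoped RealInnerProductSpace Gradient

section

variable {H : Type*} [NormedAddCommGroup H] [InnerProductSpace ℝ H] [CompleteSpace H]
  {f : H → ℝ} {s : Set H} {x y : H}

theorem ConvexOn.inner_gradient_sub_gradient_nonneg (hf : ConvexOn ℝ s f) (hx : x ∈ s)
    (hy : y ∈ s) (hfx : DifferentiableAt ℝ f x) (hfy : DifferentiableAt ℝ f y) :
    0 ≤ ⟪∇ f x - ∇ f y, x - y⟫ := by
  -- On the segment from `y` to `x`, the derivative of a convex function of one variable increases.
  set ℓ : ℝ →ᵃ[ℝ] H := AffineMap.lineMap y x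
  have hderiv {t : ℝ} {z : H} (hz : ℓ t = z) (hfz : DifferentiableAt ℝ f z) :
      HasDerivAt (f ∘ ℓ) ⟪∇ f z, x - y⟫ t := by
    subst hz
    rw [inner_gradient_left]
    exact hfz.hasFDerivAt.comp_hasDerivAt t AffineMap.hasDerivAt_lineMap
  have hconv : ConvexOn ℝ (ℓ ⁻¹' s) (f ∘ ℓ) := hf.comp_affineMap ℓ
  have h0 : (0 : ℝ) ∈ ℓ ⁻¹' s := by simpa [ℓ] using hy
  have h1 : (1 : ℝ) ∈ ℓ ⁻¹' s := by simpa [ℓ] using hx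
  have := (hconv.le_slope_of_hasDerivAt h0 h1 one_pos (hderiv (by simp [ℓ]) hfy)).trans
    (hconv.slope_le_of_hasDerivAt h0 h1 one_pos (hderiv (by simp [ℓ]) hfx))
  rw [inner_sub_left]
  linarith

theorem gradient_eq_smul_of_isLocalMin_add_sq_norm_sub {μ : ℝ} (hfx : DifferentiableAt ℝ f x)
    (hmin : IsLocalMin (fun w => f w + μ / 2 * ‖w - y‖ ^ 2) x) :
    ∇ f x = μ • (y - x) := by
  have hφ := hfx.hasFDerivAt.add
    ((((hasFDerivAt_id x).sub_const y).norm_sq).const_mul (μ / 2))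
  have hzero := hmin.hasFDerivAt_eq_zero hφ
  refine ext_inner_right ℝ fun v => ?_
  have := congrArg (· v) hzero
  simp only [id_eq, map_sub, ContinuousLinearMap.comp_id, add_apply, smul_apply, sub_apply,
    coe_innerSL_apply, nsmul_eq_mul, Nat.cast_ofNat, smul_eq_mul, zero_apply] at this
  rw [inner_gradient_left, real_inner_smul_left, inner_sub_left]
  linarith

theorem ConvexOn.mul_norm_sub_le_norm_gradient_of_isLocalMin {μ : ℝ} (hf : ConvexOn ℝ s f)
    (hx : x ∈ s) (hy : y ∈ s) (hfx : DifferentiableAt ℝ f x) (hfy : DifferentiableAt ℝ f y)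
    (hmin : IsLocalMin (fun w => f w + μ / 2 * ‖w - y‖ ^ 2) x) :
    μ * ‖x - y‖ ≤ ‖∇ f y‖ := by
  have hmono := hf.inner_gradient_sub_gradient_nonneg hx hy hfx hfy
  rw [gradient_eq_smul_of_isLocalMin_add_sq_norm_sub hfx hmin, inner_sub_left, ← neg_sub x y,
    smul_neg, inner_neg_left, real_inner_smul_left, real_inner_self_eq_norm_sq] at hmono
  rcases (norm_nonneg (x - y)).eq_or_lt with hxy | hxy
  · simp [← hxy]
  · refine le_of_mul_le_mul_right ?_ hxy
    calc μ * ‖x - y‖ * ‖x - y‖ = μ * ‖x - y‖ ^ 2 := by ring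
      _ ≤ -⟪∇ f y, x - y⟫ := by linarith
      _ ≤ ‖∇ f y‖ * ‖x - y‖ := (neg_le_abs _).trans (abs_real_inner_le_norm _ _)

end

theorem norm_sum_smul_sub_le {ι E : Type*} [SeminormedAddCommGroup E] [NormedSpace ℝ E]
    {s : Finset ι} {p : ι → ℝ} (hp : ∀ i ∈ s, 0 ≤ p i) (hsum : ∑ i ∈ s, p i = 1) (x : ι → E)
    (y : E) : ‖∑ i ∈ s, p i • x i - y‖ ≤ ∑ i ∈ s, p i * ‖x i - y‖ := by
  calc ‖∑ i ∈ s, p i • x i - y‖ = ‖∑ i ∈ s, p i • (x i - y)‖ := by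
        simp only [smul_sub, sum_sub_distrib, ← sum_smul, hsum, one_smul]
    _ ≤ ∑ i ∈ s, p i * ‖x i - y‖ := (norm_sum_le _ _).trans_eq <| sum_congr rfl fun i hi => by
        rw [norm_smul, Real.norm_of_nonneg (hp i hi)]

theorem sum_mul_le_of_sum_mul_sq_le {ι : Type*} {s : Finset ι} {p a : ι → ℝ}
    (hp : ∀ i ∈ s, 0 ≤ p i) (hsum : ∑ i ∈ s, p i = 1) {c : ℝ} (hc : 0 ≤ c)
    (h : ∑ i ∈ s, p i * a i ^ 2 ≤ c ^ 2) : ∑ i ∈ s, p i * a i ≤ c := by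
  have hjensen : (∑ i ∈ s, p i * a i) ^ 2 ≤ ∑ i ∈ s, p i * a i ^ 2 :=
    (even_two.convexOn_pow (𝕜 := ℝ)).map_sum_le hp hsum (by simp)
  exact (le_abs_self _).trans (abs_le_of_sq_le_sq (hjensen.trans h) hc)

/-- Inequality (C-8): the aggregated exact proximal update with added noise `n`
moves from `wt` by at most `(B/μ)‖∇F(wt)‖ + ‖n‖`. -/
theorem aggregated_prox_step_dist {H : Type*} [NormedAddCommGroup H]
    [InnerProductSpace ℝ H] [CompleteSpace H]
    (N : ℕ) (p : Fin N → ℝ) (hp : ∀ i, 0 ≤ p i) (hsum : ∑ i, p i = 1)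
    (F : Fin N → H → ℝ)
    (hconv : ∀ i, ConvexOn ℝ Set.univ (F i)) (hdiff : ∀ i, Differentiable ℝ (F i))
    (μ : ℝ) (hμ : 0 < μ) (wt : H) (B : ℝ) (hB : 1 ≤ B)
    (hdis : ∑ i, p i * ‖gradient (F i) wt‖ ^ 2 ≤
      B ^ 2 * ‖gradient (fun w => ∑ i, p i * F i w) wt‖ ^ 2)
    (wplus : Fin N → H)
    (hmin : ∀ i, ∀ w, F i (wplus i) + μ / 2 * ‖wplus i - wt‖ ^ 2 ≤
      F i w + μ / 2 * ‖w - wt‖ ^ 2)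
    (n : H) :
    ‖(∑ i, p i • wplus i + n) - wt‖ ≤
      (B / μ) * ‖gradient (fun w => ∑ i, p i * F i w) wt‖ + ‖n‖ := by
  set G := ‖gradient (fun w => ∑ i, p i * F i w) wt‖
  have hstep i : ‖wplus i - wt‖ ≤ ‖∇ (F i) wt‖ / μ := by
    rw [le_div_iff₀' hμ]
    exact (hconv i).mul_norm_sub_le_norm_gradient_of_isLocalMin trivial trivial (hdiff i _)
      (hdiff i _) (Filter.Eventually.of_forall (hmin i))
  have hgrad : ∑ i, p i * ‖∇ (F i) wt‖ ≤ B * G :=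
    sum_mul_le_of_sum_mul_sq_le (fun i _ => hp i) hsum
      (mul_nonneg (zero_le_one.trans hB) (norm_nonneg _)) (by rwa [mul_pow])
  calc ‖(∑ i, p i • wplus i + n) - wt‖ ≤ ‖∑ i, p i • wplus i - wt‖ + ‖n‖ := by
        rw [add_sub_right_comm]; exact norm_add_le _ _
    _ ≤ ∑ i, p i * (‖∇ (F i) wt‖ / μ) + ‖n‖ := by
        grw [norm_sum_smul_sub_le (fun i _ => hp i) hsum]
        gcongr with i
        exacts [hp i, hstep i]
    _ ≤ (B / μ) * G + ‖n‖ := by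
        simp only [← mul_div_assoc, ← sum_div, div_mul_eq_mul_div]
        gcongr
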